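/- arXiv:2109.01738 — 11 statements merged into one kernel-verified Lean document; each statement's English description precedes it below -/
import Mathlib

section
/- The point p = (n/R₀)·(1, ωε, σωε/γ) is an equilibrium of the reduced SE(R)IRS system: the vector field F(S,E,I) = (−βS(I+αE)/n + ω(n−S−E−I), βS(I+αE)/n − (σ+δ)E, σE − γI) vanishes at p. -/
/-- The SE(R)IRS basic reproductive number. -/
noncomputable def R0 (β γ δ σ α : ℝ) : ℝ := β * (α * γ + σ) / (γ * (δ + σ))

/-- The quantity ε appearing in the endemic equilibrium. -/
noncomputable def eps (β γ δ σ ω α : ℝ) : ℝ :=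
  (β * (α * γ + σ) - γ * (δ + σ)) / ((δ + σ) * (σ * ω + γ * (δ + σ + ω)))

/-- The reduced SE(R)IRS vector field on (S, E, I). -/
noncomputable def serirsRedField (β γ δ σ ω α n : ℝ) (p : ℝ × ℝ × ℝ) : ℝ × ℝ × ℝ :=
  (-β * p.1 * (p.2.2 + α * p.2.1) / n + ω * (n - p.1 - p.2.1 - p.2.2),
   β * p.1 * (p.2.2 + α * p.2.1) / n - (σ + δ) * p.2.1,
   σ * p.2.1 - γ * p.2.2)

/-! The susceptible level n/R₀ makes the incidence rate per exposed individual equal to the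
removal rate δ + σ, because R₀ γ (δ + σ) = β (αγ + σ). The S-equation then balances
because ε is defined so that ε (σω + γ(δ + σ + ω)) = γ (R₀ - 1). -/

section

variable {β γ δ σ ω α n S E I : ℝ}

theorem serirsRedField_eq_zero (hI : σ * E = γ * I)
    (hE : β * S * (I + α * E) / n = (σ + δ) * E)
    (hS : ω * (n - S - E - I) = (σ + δ) * E) :
    serirsRedField β γ δ σ ω α n (S, E, I) = 0 := by
  simp only [serirsRedField, Prod.mk_eq_zero, neg_mul, neg_div]
  refine ⟨?_, ?_, ?_⟩ <;> linarith

theorem mul_ne_zero_of_R0_ne_zero (h : R0 β γ δ σ α ≠ 0) : γ * (δ + σ) ≠ 0 :=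
  fun h0 => h (by rw [R0, h0, div_zero])

theorem R0_mul_eq (h : R0 β γ δ σ α ≠ 0) : R0 β γ δ σ α * (γ * (δ + σ)) = β * (α * γ + σ) :=
  div_mul_cancel₀ _ (mul_ne_zero_of_R0_ne_zero h)

theorem eps_mul_eq (h : R0 β γ δ σ α ≠ 0) (hD : σ * ω + γ * (δ + σ + ω) ≠ 0) :
    eps β γ δ σ ω α * (σ * ω + γ * (δ + σ + ω)) = γ * (R0 β γ δ σ α - 1) := by
  have hδσ : δ + σ ≠ 0 := right_ne_zero_of_mul (mul_ne_zero_of_R0_ne_zero h)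
  rw [eps, div_mul_eq_mul_div, div_eq_iff (mul_ne_zero hδσ hD)]
  linear_combination -(σ * ω + γ * (δ + σ + ω)) * R0_mul_eq h

theorem serirsRedField_endemic_eq_zero (hn : n ≠ 0) (hR : R0 β γ δ σ α ≠ 0)
    (hD : σ * ω + γ * (δ + σ + ω) ≠ 0) :
    serirsRedField β γ δ σ ω α n
      (n / R0 β γ δ σ α * 1,
       n / R0 β γ δ σ α * (ω * eps β γ δ σ ω α),
       n / R0 β γ δ σ α * (σ * ω * eps β γ δ σ ω α / γ)) = 0 := by
  have hγ : γ ≠ 0 := left_ne_zero_of_mul (mul_ne_zero_of_R0_ne_zero hR)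
  apply serirsRedField_eq_zero
  · field_simp
  · field_simp
    linear_combination -(ω * eps β γ δ σ ω α) * R0_mul_eq hR
  · field_simp
    linear_combination -ω * eps_mul_eq hR hD

end

theorem stmt_3_general (β γ δ σ ω α n : ℝ)
    (hβ : 0 < β) (hγ : 0 < γ) (hσ : 0 < σ) (hω : 0 < ω) (hn : 0 < n)
    (hδ : 0 ≤ δ) (hα0 : 0 ≤ α) :
    serirsRedField β γ δ σ ω α n
      (n / R0 β γ δ σ α * 1,
       n / R0 β γ δ σ α * (ω * eps β γ δ σ ω α),
       n / R0 β γ δ σ α * (σ * ω * eps β γ δ σ ω α / γ)) = (0, 0, 0) := by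
  have hR : R0 β γ δ σ α ≠ 0 := by unfold R0; positivity
  exact serirsRedField_endemic_eq_zero hn.ne' hR (by positivity)

/-- The point p = (n/R₀)·(1, ωε, σωε/γ) is an equilibrium of the reduced SE(R)IRS system. -/
theorem stmt_3 (β γ δ σ ω α n : ℝ)
    (hβ : 0 < β) (hγ : 0 < γ) (hσ : 0 < σ) (hω : 0 < ω) (hn : 0 < n)
    (hδ : 0 ≤ δ) (hα0 : 0 ≤ α) (hα1 : α ≤ 1) :
    serirsRedField β γ δ σ ω α n
      (n / R0 β γ δ σ α * 1,
       n / R0 β γ δ σ α * (ω * eps β γ δ σ ω α),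
       n / R0 β γ δ σ α * (σ * ω * eps β γ δ σ ω α / γ)) = (0, 0, 0) :=
  stmt_3_general β γ δ σ ω α n hβ hγ hσ hω hn hδ hα0
end

section
/- The matrix M = !![−εω(δ+σ)−ω, −αβ/R₀−ω, −β/R₀−ω; εω(δ+σ), −βσ/(γR₀), β/R₀; 0, σ, −γ] is singular (det M = 0) if and only if R₀ = 1. -/
/-!
Expanding along the first column, the cofactor of the (1,1) entry vanishes, so the determinant is
`-εω(δ+σ)` times the cofactor `β(αγ+σ)/R₀ + ω(γ+σ) = γ(δ+σ) + ω(γ+σ)`, which is exactly the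
second factor of the denominator of `ε`. Hence `det M = -ω (β(αγ+σ) - γ(δ+σ))`, which vanishes
precisely when `β(αγ+σ) = γ(δ+σ)`, i.e. when `R₀ = 1`.
-/

open Matrix

/-- The Jacobian of the reduced SE(R)IRS vector field at the endemic equilibrium. -/
noncomputable def Mjac (β γ δ σ ω α : ℝ) : Matrix (Fin 3) (Fin 3) ℝ :=
  !![-(eps β γ δ σ ω α) * ω * (δ + σ) - ω, -(α * β) / R0 β γ δ σ α - ω, -β / R0 β γ δ σ α - ω;
     eps β γ δ σ ω α * ω * (δ + σ), -(β * σ) / (γ * R0 β γ δ σ α), β / R0 β γ δ σ α;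
     0, σ, -γ]

section

variable {β γ δ σ ω α : ℝ}

theorem div_R0_eq (h : β * (α * γ + σ) ≠ 0) :
    β * (α * γ + σ) / R0 β γ δ σ α = γ * (δ + σ) :=
  div_div_cancel₀ h

theorem Mjac_det_eq_neg_eps_mul (hγ : γ ≠ 0) :
    (Mjac β γ δ σ ω α).det = -ω * (eps β γ δ σ ω α * (δ + σ)) *
      (β * (α * γ + σ) / R0 β γ δ σ α + ω * (γ + σ)) := by
  rw [Mjac, det_fin_three]
  simp only [of_apply, cons_val', cons_val_zero, cons_val_one, cons_val_two, empty_val',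
    cons_val_fin_one, head_cons, head_fin_const, tail_cons]
  generalize eps β γ δ σ ω α = e
  generalize R0 β γ δ σ α = R
  rcases eq_or_ne R 0 with rfl | hR
  · simp only [div_zero, mul_zero]
    ring
  · field_simp
    ring

theorem Mjac_det_eq (hγ : γ ≠ 0) (hβ : β * (α * γ + σ) ≠ 0) (hδσ : δ + σ ≠ 0)
    (hD : σ * ω + γ * (δ + σ + ω) ≠ 0) :
    (Mjac β γ δ σ ω α).det = ω * (γ * (δ + σ) - β * (α * γ + σ)) := by
  have heps : eps β γ δ σ ω α * ((δ + σ) * (σ * ω + γ * (δ + σ + ω))) =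
      β * (α * γ + σ) - γ * (δ + σ) :=
    div_mul_cancel₀ _ (mul_ne_zero hδσ hD)
  rw [Mjac_det_eq_neg_eps_mul hγ, div_R0_eq hβ]
  linear_combination (-ω) * heps

end

theorem stmt_7_general (β γ δ σ ω α : ℝ)
    (hβ : 0 < β) (hγ : 0 < γ) (hσ : 0 < σ) (hω : 0 < ω)
    (hδ : 0 ≤ δ) (hα0 : 0 ≤ α) :
    (Mjac β γ δ σ ω α).det = 0 ↔ R0 β γ δ σ α = 1 := by
  have hδσ : 0 < δ + σ := by positivity
  have hβ' : 0 < β * (α * γ + σ) := by positivity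
  have hD : 0 < σ * ω + γ * (δ + σ + ω) := by positivity
  rw [Mjac_det_eq hγ.ne' hβ'.ne' hδσ.ne' hD.ne', R0, div_eq_one_iff_eq (by positivity),
    mul_eq_zero, sub_eq_zero]
  simp [hω.ne', eq_comm]

/-- M is singular if and only if R₀ = 1. -/
theorem stmt_7 (β γ δ σ ω α n : ℝ)
    (hβ : 0 < β) (hγ : 0 < γ) (hσ : 0 < σ) (hω : 0 < ω) (hn : 0 < n)
    (hδ : 0 ≤ δ) (hα0 : 0 ≤ α) (hα1 : α ≤ 1) :
    (Mjac β γ δ σ ω α).det = 0 ↔ R0 β γ δ σ α = 1 :=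
  stmt_7_general β γ δ σ ω α hβ hγ hσ hω hδ hα0
end

section
/- If R₀ > 1, then the determinant of the bialternate-sum matrix G = !![−εω(δ+σ) − ω − βσ/(γR₀), β/R₀, β/R₀ + ω; σ, −εω(δ+σ) − ω − γ, −αβ/R₀ − ω; 0, εω(δ+σ), −βσ/(γR₀) − γ] is strictly negative. -/
open Matrix

/-- The bialternate sum of M with itself. -/
noncomputable def Gbial (β γ δ σ ω α : ℝ) : Matrix (Fin 3) (Fin 3) ℝ :=
  !![-(eps β γ δ σ ω α) * ω * (δ + σ) - ω - β * σ / (γ * R0 β γ δ σ α),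
       β / R0 β γ δ σ α, β / R0 β γ δ σ α + ω;
     σ, -(eps β γ δ σ ω α) * ω * (δ + σ) - ω - γ, -(α * β) / R0 β γ δ σ α - ω;
     0, eps β γ δ σ ω α * ω * (δ + σ), -(β * σ) / (γ * R0 β γ δ σ α) - γ]

/-!
Writing `k = (δ + σ) / (αγ + σ)` and `E = εω(δ + σ)`, one has `β / R₀ = γk`, so `G` only depends
on `E, ω, k, γ, σ, α`. Its determinant is `σE(γk + ω) - P` with
`P = (E + ω)²s + (E + ω)s² + (E + ω + σk)E(αγk + ω)` and `s = σk + γ`.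
When `R₀ > 1` we have `E > 0`, and `α ≤ 1` gives `σ ≤ s`; then `(E + ω)²s > Eωσ` and
`(E + ω)s² ≥ Eσγk` show `P > σE(γk + ω)`.
-/

def bialternateModel (E ω k γ σ α : ℝ) : Matrix (Fin 3) (Fin 3) ℝ :=
  !![-E - ω - σ * k, γ * k, γ * k + ω;
     σ, -E - ω - γ, -(α * γ * k) - ω;
     0, E, -(σ * k) - γ]

lemma det_bialternateModel (E ω k γ σ α : ℝ) :
    (bialternateModel E ω k γ σ α).det =
      σ * E * (γ * k + ω) - ((E + ω) ^ 2 * (σ * k + γ) + (E + ω) * (σ * k + γ) ^ 2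
        + (E + ω + σ * k) * E * (α * γ * k + ω)) := by
  simp only [bialternateModel, det_fin_three, of_apply, cons_val', cons_val_zero, cons_val_one,
    cons_val_two, empty_val', cons_val_fin_one, head_cons, tail_cons, head_fin_const]
  ring

lemma det_bialternateModel_neg {E ω k γ σ α : ℝ} (hE : 0 < E) (hω : 0 < ω) (hk : 0 ≤ k)
    (hγ : 0 < γ) (hσ : 0 ≤ σ) (hα : 0 ≤ α) (hσs : σ ≤ σ * k + γ) :
    (bialternateModel E ω k γ σ α).det < 0 := by
  rw [det_bialternateModel, sub_neg]
  have hs : 0 < σ * k + γ := by positivity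
  have hEω : 0 < E * ω := mul_pos hE hω
  have h_ω : σ * E * ω < (E + ω) ^ 2 * (σ * k + γ) :=
    calc σ * E * ω ≤ E * ω * (σ * k + γ) := by nlinarith
      _ < (E + ω) ^ 2 * (σ * k + γ) := by
        gcongr; nlinarith [sq_nonneg E, sq_nonneg ω]
  have h_γk : σ * E * (γ * k) ≤ (E + ω) * (σ * k + γ) ^ 2 :=
    calc σ * E * (γ * k) ≤ E * (σ * k + γ) ^ 2 := by
          have : 0 ≤ σ * k * γ := by positivity
          nlinarith [sq_nonneg (σ * k), sq_nonneg γ]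
      _ ≤ (E + ω) * (σ * k + γ) ^ 2 := by gcongr; linarith
  have h_rest : 0 ≤ (E + ω + σ * k) * E * (α * γ * k + ω) := by positivity
  linarith

lemma div_R0 {β : ℝ} (γ δ σ α : ℝ) (hβ : β ≠ 0) :
    β / R0 β γ δ σ α = γ * ((δ + σ) / (α * γ + σ)) := by
  rw [R0, div_div_eq_mul_div, mul_div_mul_left _ _ hβ, mul_div_assoc]

lemma Gbial_eq_bialternateModel {β γ : ℝ} (δ σ ω α : ℝ) (hβ : β ≠ 0) (hγ : γ ≠ 0) :
    Gbial β γ δ σ ω α = bialternateModel (eps β γ δ σ ω α * ω * (δ + σ)) ω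
      ((δ + σ) / (α * γ + σ)) γ σ α := by
  have hσ : β * σ / (γ * R0 β γ δ σ α) = σ * ((δ + σ) / (α * γ + σ)) := by
    rw [mul_comm γ, ← div_div, mul_div_right_comm, div_R0 γ δ σ α hβ]
    field_simp
  have hα : α * β / R0 β γ δ σ α = α * γ * ((δ + σ) / (α * γ + σ)) := by
    rw [mul_div_assoc, div_R0 γ δ σ α hβ, mul_assoc]
  simp only [Gbial, bialternateModel, neg_div, hσ, hα, div_R0 γ δ σ α hβ, neg_mul]

lemma sub_pos_of_one_lt_R0 {β γ δ σ α : ℝ} (hγ : 0 < γ) (hδσ : 0 < δ + σ)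
    (hR0 : 1 < R0 β γ δ σ α) : 0 < β * (α * γ + σ) - γ * (δ + σ) := by
  rw [R0, one_lt_div (by positivity)] at hR0
  linarith

lemma eps_pos {β γ δ σ ω α : ℝ} (hγ : 0 < γ) (hσ : 0 < σ) (hω : 0 < ω) (hδ : 0 ≤ δ)
    (hR0 : 1 < R0 β γ δ σ α) : 0 < eps β γ δ σ ω α := by
  have hδσ : 0 < δ + σ := by positivity
  have := sub_pos_of_one_lt_R0 hγ hδσ hR0
  unfold eps
  positivity

lemma le_mul_div_add {γ δ σ α : ℝ} (hγ : 0 ≤ γ) (hσ : 0 < σ) (hδ : 0 ≤ δ) (hα0 : 0 ≤ α)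
    (hα1 : α ≤ 1) : σ ≤ σ * ((δ + σ) / (α * γ + σ)) + γ := by
  have : σ - γ ≤ σ * (δ + σ) / (α * γ + σ) := by
    rw [le_div_iff₀ (by positivity)]
    nlinarith [mul_nonneg (mul_nonneg hσ.le hγ) (sub_nonneg.mpr hα1), mul_nonneg hσ.le hδ,
      mul_nonneg hα0 (sq_nonneg γ)]
  rw [← mul_div_assoc]
  linarith

theorem stmt_8_general (β γ δ σ ω α : ℝ)
    (hβ : 0 < β) (hγ : 0 < γ) (hσ : 0 < σ) (hω : 0 < ω)
    (hδ : 0 ≤ δ) (hα0 : 0 ≤ α) (hα1 : α ≤ 1)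
    (hR0 : 1 < R0 β γ δ σ α) :
    (Gbial β γ δ σ ω α).det < 0 := by
  have hE : 0 < eps β γ δ σ ω α * ω * (δ + σ) := by
    have := eps_pos hγ hσ hω hδ hR0
    positivity
  rw [Gbial_eq_bialternateModel δ σ ω α hβ.ne' hγ.ne']
  exact det_bialternateModel_neg hE hω (by positivity) hγ hσ.le hα0
    (le_mul_div_add hγ.le hσ hδ hα0 hα1)

/-- If R₀ > 1 then the determinant of the bialternate-sum matrix G is strictly negative. -/
theorem stmt_8 (β γ δ σ ω α n : ℝ)
    (hβ : 0 < β) (hγ : 0 < γ) (hσ : 0 < σ) (hω : 0 < ω) (hn : 0 < n)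
    (hδ : 0 ≤ δ) (hα0 : 0 ≤ α) (hα1 : α ≤ 1)
    (hR0 : 1 < R0 β γ δ σ α) :
    (Gbial β γ δ σ ω α).det < 0 :=
  stmt_8_general β γ δ σ ω α hβ hγ hσ hω hδ hα0 hα1 hR0
end

section
/- The eigenvalues of the matrix N = !![−ω, −αβ−ω, −β−ω; 0, αβ−δ−σ, β; 0, σ, −γ] over ℝ are exactly λ₁ = −ω, λ₂ = (αβ−γ−δ−σ − √D)/2, and λ₃ = (αβ−γ−δ−σ + √D)/2, where D = (−αβ+γ+δ+σ)² − 4(−αβγ + δγ − βσ + γσ). Equivalently, the characteristic polynomial of N factors as (λ+ω)(λ−λ₂)(λ−λ₃). -/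
/-!
The first column of `N` is `(-ω, 0, 0)`, so expanding along it splits off the factor `λ + ω`
and leaves the characteristic polynomial of the block `!![αβ - δ - σ, β; σ, -γ]`. Its
discriminant is `(αβ - δ - σ + γ)² + 4βσ ≥ 0`, so the quadratic formula factors it over `ℝ`
with the roots `λ₂, λ₃`.
-/

open Matrix Polynomial

/-- The Jacobian of the reduced SE(R)IRS vector field at the disease-free
equilibrium (n, 0, 0). -/
noncomputable def Njac (β γ δ σ ω α : ℝ) : Matrix (Fin 3) (Fin 3) ℝ :=
  !![-ω, -(α * β) - ω, -β - ω;
     0, α * β - δ - σ, β;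
     0, σ, -γ]

namespace Matrix

variable {R : Type*} [CommRing R]

lemma charpoly_eq_X_sub_C_mul_charpoly_submatrix_succ {n : ℕ}
    (M : Matrix (Fin (n + 1)) (Fin (n + 1)) R) (hM : ∀ i : Fin n, M i.succ 0 = 0) :
    M.charpoly = (X - C (M 0 0)) * (M.submatrix Fin.succ Fin.succ).charpoly := by
  have hsub : (M.submatrix Fin.succ Fin.succ).charmatrix
      = M.charmatrix.submatrix Fin.succ Fin.succ := by
    ext i j
    simp only [charmatrix_apply, submatrix_apply]
    by_cases h : i = j <;> simp [h]
  rw [charpoly, det_succ_column_zero, Fin.sum_univ_succ, charpoly, hsub]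
  simp [hM, charmatrix_apply_eq]

end Matrix

lemma Polynomial.X_sq_sub_C_mul_X_add_C_eq_mul {K : Type*} [Field K] [NeZero (2 : K)]
    {t d s : K} (hs : s ^ 2 = t ^ 2 - 4 * d) :
    (X ^ 2 - C t * X + C d : K[X]) = (X - C ((t - s) / 2)) * (X - C ((t + s) / 2)) := by
  have hd : d = (t - s) / 2 * ((t + s) / 2) := by
    field_simp
    linear_combination hs
  have ht : t = (t - s) / 2 + (t + s) / 2 := by field_simp; ring
  rw [hd, C_mul]
  nth_rewrite 1 [ht]
  rw [C_add]
  ring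

theorem stmt_10_general (β γ δ σ ω α : ℝ)
    (hβ : 0 < β) (hσ : 0 < σ) :
    (Njac β γ δ σ ω α).charpoly =
      (X + C ω) *
      (X - C ((α * β - γ - δ - σ -
        Real.sqrt ((-(α * β) + γ + δ + σ) ^ 2
          - 4 * (-(α * β) * γ + δ * γ - β * σ + γ * σ))) / 2)) *
      (X - C ((α * β - γ - δ - σ +
        Real.sqrt ((-(α * β) + γ + δ + σ) ^ 2
          - 4 * (-(α * β) * γ + δ * γ - β * σ + γ * σ))) / 2)) := by
  set D := (-(α * β) + γ + δ + σ) ^ 2 - 4 * (-(α * β) * γ + δ * γ - β * σ + γ * σ)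
  have hD : 0 ≤ D := by
    rw [show D = (α * β - δ - σ + γ) ^ 2 + 4 * (β * σ) by ring]
    positivity
  rw [mul_assoc, ← X_sq_sub_C_mul_X_add_C_eq_mul (d := -(α * β) * γ + δ * γ - β * σ + γ * σ)
    (by rw [Real.sq_sqrt hD]; ring)]
  have hblock : (Njac β γ δ σ ω α).submatrix Fin.succ Fin.succ = !![α * β - δ - σ, β; σ, -γ] := by
    ext i j
    fin_cases i <;> fin_cases j <;> rfl
  rw [charpoly_eq_X_sub_C_mul_charpoly_submatrix_succ _ (by simp [Fin.forall_fin_two, Njac]),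
    hblock, charpoly_fin_two, trace_fin_two_of, det_fin_two_of,
    show Njac β γ δ σ ω α 0 0 = -ω from rfl, C_neg, sub_neg_eq_add]
  congr 5 <;> ring

/-- The eigenvalues of N are exactly λ₁ = −ω, λ₂ and λ₃: the characteristic
polynomial factors as (λ + ω)(λ − λ₂)(λ − λ₃). -/
theorem stmt_10 (β γ δ σ ω α n : ℝ)
    (hβ : 0 < β) (hγ : 0 < γ) (hσ : 0 < σ) (hω : 0 < ω) (hn : 0 < n)
    (hδ : 0 ≤ δ) (hα0 : 0 ≤ α) (hα1 : α ≤ 1) :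
    (Njac β γ δ σ ω α).charpoly =
      (X + C ω) *
      (X - C ((α * β - γ - δ - σ -
        Real.sqrt ((-(α * β) + γ + δ + σ) ^ 2
          - 4 * (-(α * β) * γ + δ * γ - β * σ + γ * σ))) / 2)) *
      (X - C ((α * β - γ - δ - σ +
        Real.sqrt ((-(α * β) + γ + δ + σ) ^ 2
          - 4 * (-(α * β) * γ + δ * γ - β * σ + γ * σ))) / 2)) :=
  stmt_10_general β γ δ σ ω α hβ hσ
end

section
/- The discriminant identity (−αβ+γ+δ+σ)² − 4(−αβγ + δγ − βσ + γσ) = 4βσ + (αβ+γ−δ−σ)² holds, and hence this quantity is nonnegative (strictly positive since β, σ > 0); consequently all three eigenvalues of the matrix N = !![−ω, −αβ−ω, −β−ω; 0, αβ−δ−σ, β; 0, σ, −γ] are real. -/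
/-!
The characteristic polynomial of `N` splits off the linear factor `λ + ω` (the first column of `N`
is `(-ω, 0, 0)`), and the remaining quadratic factor has discriminant `4βσ + (αβ + γ - δ - σ)²`,
which is positive; so all roots are real.
-/

open Matrix Polynomial

theorem Complex.im_eq_zero_of_quadratic_eq_zero {b c : ℝ} (h : 0 ≤ discrim 1 b c) {z : ℂ}
    (hz : z ^ 2 + b * z + c = 0) : z.im = 0 := by
  have hs : discrim 1 (b : ℂ) c = (√(discrim 1 b c) : ℂ) * √(discrim 1 b c) := by
    rw [← Complex.ofReal_mul, Real.mul_self_sqrt h]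
    simp [discrim]
  rcases (quadratic_eq_zero_iff one_ne_zero hs z).1 (by linear_combination hz) with rfl | rfl <;>
    simp

theorem charpoly_Njac (β γ δ σ ω α : ℝ) :
    (Njac β γ δ σ ω α).charpoly = (X + C ω) *
      (X ^ 2 + C (-(α * β) + γ + δ + σ) * X + C (-(α * β) * γ + δ * γ - β * σ + γ * σ)) := by
  rw [charpoly, det_fin_three]
  simp only [Njac, Fin.isValue, charmatrix_apply_eq, charmatrix_apply_ne, ne_eq, Fin.reduceEq,
    not_false_eq_true, of_apply, cons_val', cons_val_zero, cons_val_one, cons_val, cons_val_fin_one,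
    map_neg, map_sub, map_add, map_mul, map_zero]
  ring

theorem stmt_11_general (β γ δ σ ω α : ℝ)
    (hβ : 0 < β) (hσ : 0 < σ) :
    (-(α * β) + γ + δ + σ) ^ 2 - 4 * (-(α * β) * γ + δ * γ - β * σ + γ * σ)
        = 4 * β * σ + (α * β + γ - δ - σ) ^ 2 ∧
    0 < 4 * β * σ + (α * β + γ - δ - σ) ^ 2 ∧
    ∀ μ ∈ spectrum ℂ ((Njac β γ δ σ ω α).map (Complex.ofReal ·)), μ.im = 0 := by
  have hdisc : (-(α * β) + γ + δ + σ) ^ 2 - 4 * (-(α * β) * γ + δ * γ - β * σ + γ * σ)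
      = 4 * β * σ + (α * β + γ - δ - σ) ^ 2 := by ring
  have hpos : 0 < 4 * β * σ + (α * β + γ - δ - σ) ^ 2 := by positivity
  refine ⟨hdisc, hpos, fun μ hμ => ?_⟩
  rw [mem_spectrum_iff_isRoot_charpoly] at hμ
  change ((Njac β γ δ σ ω α).map Complex.ofRealHom).charpoly.IsRoot μ at hμ
  rw [charpoly_map, charpoly_Njac] at hμ
  simp only [Polynomial.map_mul, Polynomial.map_add, Polynomial.map_pow, map_X, map_C,
    IsRoot.def, eval_mul, eval_add, eval_pow, eval_X, eval_C, mul_eq_zero,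
    Complex.ofRealHom_eq_coe] at hμ
  rcases hμ with hlin | hquad
  · simp [eq_neg_of_add_eq_zero_left hlin]
  · refine Complex.im_eq_zero_of_quadratic_eq_zero ?_ hquad
    rw [discrim]
    linarith

/-- The discriminant identity and positivity; consequently all eigenvalues of N
(over ℂ) are real. -/
theorem stmt_11 (β γ δ σ ω α n : ℝ)
    (hβ : 0 < β) (hγ : 0 < γ) (hσ : 0 < σ) (hω : 0 < ω) (hn : 0 < n)
    (hδ : 0 ≤ δ) (hα0 : 0 ≤ α) (hα1 : α ≤ 1) :
    (-(α * β) + γ + δ + σ) ^ 2 - 4 * (-(α * β) * γ + δ * γ - β * σ + γ * σ)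
        = 4 * β * σ + (α * β + γ - δ - σ) ^ 2 ∧
    0 < 4 * β * σ + (α * β + γ - δ - σ) ^ 2 ∧
    ∀ μ ∈ spectrum ℂ ((Njac β γ δ σ ω α).map (Complex.ofReal ·)), μ.im = 0 :=
  stmt_11_general β γ δ σ ω α hβ hσ
end

section
/- The eigenvalue λ₂ = (αβ−γ−δ−σ − √(4βσ + (αβ+γ−δ−σ)²))/2 of the matrix N satisfies λ₂ ≤ −γ; in particular λ₂ < 0. -/
open Matrix Polynomial

theorem stmt_12_general (β γ δ σ α : ℝ)
    (hβ : 0 < β) (hγ : 0 < γ) (hσ : 0 < σ) :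
    (α * β - γ - δ - σ - Real.sqrt (4 * β * σ + (α * β + γ - δ - σ) ^ 2)) / 2 ≤ -γ ∧
    (α * β - γ - δ - σ - Real.sqrt (4 * β * σ + (α * β + γ - δ - σ) ^ 2)) / 2 < 0 := by
  have hsqrt : α * β + γ - δ - σ ≤ Real.sqrt (4 * β * σ + (α * β + γ - δ - σ) ^ 2) :=
    (le_abs_self _).trans <| Real.abs_le_sqrt <| le_add_of_nonneg_left (by positivity)
  exact ⟨by linarith, by linarith⟩

/-- The eigenvalue λ₂ of N satisfies λ₂ ≤ −γ < 0. -/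
theorem stmt_12 (β γ δ σ ω α n : ℝ)
    (hβ : 0 < β) (hγ : 0 < γ) (hσ : 0 < σ) (hω : 0 < ω) (hn : 0 < n)
    (hδ : 0 ≤ δ) (hα0 : 0 ≤ α) (hα1 : α ≤ 1) :
    (α * β - γ - δ - σ - Real.sqrt (4 * β * σ + (α * β + γ - δ - σ) ^ 2)) / 2 ≤ -γ ∧
    (α * β - γ - δ - σ - Real.sqrt (4 * β * σ + (α * β + γ - δ - σ) ^ 2)) / 2 < 0 :=
  stmt_12_general β γ δ σ α hβ hγ hσ
end

section
/- Let λ₃ = (αβ−γ−δ−σ + √(4βσ + (αβ+γ−δ−σ)²))/2. Then λ₃ < 0 if and only if R₀ < 1, λ₃ = 0 if and only if R₀ = 1, and λ₃ > 0 if and only if R₀ > 1. -/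
theorem sign_div_sub_one {K : Type*} [Field K] [LinearOrder K] [IsStrictOrderedRing K] {a b : K}
    (hb : 0 < b) : SignType.sign (a / b - 1) = SignType.sign (a - b) := by
  rw [div_sub_one hb.ne', div_eq_mul_inv, sign_mul, sign_pos (inv_pos.2 hb), mul_one]

theorem sign_largest_root_eq_sign {T E : ℝ} (hT : E ≤ 0 → T < 0) :
    SignType.sign ((T + √(T ^ 2 + 4 * E)) / 2) = SignType.sign E := by
  rcases lt_trichotomy E 0 with hE | rfl | hE
  · have hsqrt : √(T ^ 2 + 4 * E) < -T := by
      rw [Real.sqrt_lt' (neg_pos.2 (hT hE.le))]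
      linarith
    rw [sign_neg hE, sign_neg (by linarith)]
  · rw [mul_zero, add_zero, Real.sqrt_sq_eq_abs, abs_of_neg (hT le_rfl)]
    simp
  · have hsqrt : |T| < √(T ^ 2 + 4 * E) := by
      rw [Real.lt_sqrt (abs_nonneg T), sq_abs]
      linarith
    rw [sign_pos hE, sign_pos (by linarith [neg_abs_le T])]

theorem lt_zero_iff_and_eq_zero_iff_and_pos_iff_of_sign_eq {α : Type*} [Zero α] [LinearOrder α]
    {x y : α} (h : SignType.sign x = SignType.sign y) :
    (x < 0 ↔ y < 0) ∧ (x = 0 ↔ y = 0) ∧ (0 < x ↔ 0 < y) := by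
  rw [← sign_eq_neg_one_iff, ← sign_eq_zero_iff, ← sign_eq_one_iff, h, sign_eq_neg_one_iff,
    sign_eq_zero_iff, sign_eq_one_iff]
  exact ⟨Iff.rfl, Iff.rfl, Iff.rfl⟩

theorem stmt_13_general (β γ δ σ α : ℝ)
    (hβ : 0 < β) (hγ : 0 < γ) (hσ : 0 < σ)
    (hδ : 0 ≤ δ) :
    ((α * β - γ - δ - σ + Real.sqrt (4 * β * σ + (α * β + γ - δ - σ) ^ 2)) / 2 < 0
        ↔ R0 β γ δ σ α < 1) ∧
    ((α * β - γ - δ - σ + Real.sqrt (4 * β * σ + (α * β + γ - δ - σ) ^ 2)) / 2 = 0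
        ↔ R0 β γ δ σ α = 1) ∧
    (0 < (α * β - γ - δ - σ + Real.sqrt (4 * β * σ + (α * β + γ - δ - σ) ^ 2)) / 2
        ↔ 1 < R0 β γ δ σ α) := by
  have hdisc : 4 * β * σ + (α * β + γ - δ - σ) ^ 2
      = (α * β - γ - δ - σ) ^ 2 + 4 * (β * (α * γ + σ) - γ * (δ + σ)) := by ring
  have htrace : β * (α * γ + σ) - γ * (δ + σ) ≤ 0 → α * β - γ - δ - σ < 0 := fun hE ↦ by
    have : 0 < β * σ := mul_pos hβ hσ
    nlinarith
  have hsign : SignType.sign ((α * β - γ - δ - σ + √(4 * β * σ + (α * β + γ - δ - σ) ^ 2)) / 2)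
      = SignType.sign (R0 β γ δ σ α - 1) := by
    rw [R0, sign_div_sub_one (by positivity), hdisc, sign_largest_root_eq_sign htrace]
  simpa only [sub_neg, sub_eq_zero, sub_pos] using
    lt_zero_iff_and_eq_zero_iff_and_pos_iff_of_sign_eq hsign

/-- The sign of the largest eigenvalue λ₃ of N is determined by R₀. -/
theorem stmt_13 (β γ δ σ ω α n : ℝ)
    (hβ : 0 < β) (hγ : 0 < γ) (hσ : 0 < σ) (hω : 0 < ω) (hn : 0 < n)
    (hδ : 0 ≤ δ) (hα0 : 0 ≤ α) (hα1 : α ≤ 1) :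
    ((α * β - γ - δ - σ + Real.sqrt (4 * β * σ + (α * β + γ - δ - σ) ^ 2)) / 2 < 0
        ↔ R0 β γ δ σ α < 1) ∧
    ((α * β - γ - δ - σ + Real.sqrt (4 * β * σ + (α * β + γ - δ - σ) ^ 2)) / 2 = 0
        ↔ R0 β γ δ σ α = 1) ∧
    (0 < (α * β - γ - δ - σ + Real.sqrt (4 * β * σ + (α * β + γ - δ - σ) ^ 2)) / 2
        ↔ 1 < R0 β γ δ σ α) :=
  stmt_13_general β γ δ σ α hβ hγ hσ hδ
end

section
/- Lemma (stability of the disease-free equilibrium): every complex eigenvalue of the matrix N = !![−ω, −αβ−ω, −β−ω; 0, αβ−δ−σ, β; 0, σ, −γ] (viewed over ℂ) has strictly negative real part if and only if R₀ < 1. Moreover, if R₀ > 1 then N has an eigenvalue with strictly positive real part. -/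
/-!
The eigenvalues of `N` are `-ω` together with the roots of `μ² - T μ + D`, where `T` and `D`
are the trace and determinant of the lower right (infected) block of `N`, and
`D = γ(δ + σ)(1 - R₀)`. If `D > 0` then also `T < 0`, and the roots of a real quadratic with
negative trace and positive determinant lie in the open left half-plane. If `D < 0` the quadratic
has a positive real root, and if `D = 0` it has the root `0`.
-/

open Matrix Polynomial

-- Trace and determinant of the infected block `!![αβ - δ - σ, β; σ, -γ]` of `Njac`.
noncomputable def infTrace (β γ δ σ α : ℝ) : ℝ := α * β - δ - σ - γ

noncomputable def infDet (β γ δ σ α : ℝ) : ℝ := γ * (δ + σ) - β * (α * γ + σ)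

lemma R0_lt_one_iff {β γ δ σ α : ℝ} (h : 0 < γ * (δ + σ)) :
    R0 β γ δ σ α < 1 ↔ 0 < infDet β γ δ σ α := by
  rw [R0, div_lt_one h, infDet, sub_pos]

lemma one_lt_R0_iff {β γ δ σ α : ℝ} (h : 0 < γ * (δ + σ)) :
    1 < R0 β γ δ σ α ↔ infDet β γ δ σ α < 0 := by
  rw [R0, one_lt_div h, infDet, sub_neg]

lemma infTrace_neg_of_infDet_pos {β γ δ σ α : ℝ} (hβ : 0 ≤ β) (hγ : 0 < γ) (hσ : 0 ≤ σ)
    (hD : 0 < infDet β γ δ σ α) : infTrace β γ δ σ α < 0 := by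
  unfold infDet infTrace at *
  nlinarith [mul_nonneg hβ hσ]

lemma det_algebraMap_sub_Njac (β γ δ σ ω α : ℝ) (μ : ℂ) :
    (algebraMap ℂ (Matrix (Fin 3) (Fin 3) ℂ) μ - (Njac β γ δ σ ω α).map (Complex.ofReal ·)).det
      = (μ + ω) * (μ ^ 2 - infTrace β γ δ σ α * μ + infDet β γ δ σ α) := by
  simp only [algebraMap_eq_diagonal, diagonal, Pi.algebraMap_apply, Algebra.algebraMap_self,
    RingHom.id_apply, Njac, det_fin_three, Matrix.sub_apply, of_apply, map_apply, cons_val',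
    cons_val_zero, cons_val_one, cons_val, cons_val_fin_one, Fin.reduceEq, ↓reduceIte,
    Complex.ofReal_neg, Complex.ofReal_sub, Complex.ofReal_mul, Complex.ofReal_add,
    Complex.ofReal_zero, infTrace, infDet]
  ring

lemma mem_spectrum_Njac_iff (β γ δ σ ω α : ℝ) (μ : ℂ) :
    μ ∈ spectrum ℂ ((Njac β γ δ σ ω α).map (Complex.ofReal ·)) ↔
      (μ + ω) * (μ ^ 2 - infTrace β γ δ σ α * μ + infDet β γ δ σ α) = 0 := by
  rw [spectrum.mem_iff, isUnit_iff_isUnit_det, isUnit_iff_ne_zero, not_not,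
    det_algebraMap_sub_Njac]

lemma re_neg_of_sq_sub_mul_add_eq_zero {T D : ℝ} (hT : T < 0) (hD : 0 < D) {μ : ℂ}
    (h : μ ^ 2 - T * μ + D = 0) : μ.re < 0 := by
  have hre : μ.re ^ 2 - μ.im ^ 2 - T * μ.re + D = 0 := by
    simpa [sq] using congrArg Complex.re h
  have him : μ.im * (2 * μ.re - T) = 0 := by
    linear_combination (by simpa [sq] using congrArg Complex.im h : _ = _)
  by_contra! hμ
  rcases mul_eq_zero.mp him with him0 | hhalf
  · rw [him0] at hre
    nlinarith
  · linarith

lemma exists_pos_sq_sub_mul_add_eq_zero {T D : ℝ} (hD : D < 0) :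
    ∃ x : ℝ, 0 < x ∧ x ^ 2 - T * x + D = 0 := by
  have hdisc : 0 ≤ T ^ 2 - 4 * D := by nlinarith
  refine ⟨(T + √(T ^ 2 - 4 * D)) / 2, ?_, ?_⟩
  · have : -T < √(T ^ 2 - 4 * D) := Real.lt_sqrt_of_sq_lt (by linarith)
    linarith
  · linear_combination Real.sq_sqrt hdisc / 4

lemma exists_nonneg_sq_sub_mul_add_eq_zero {T D : ℝ} (hD : D ≤ 0) :
    ∃ x : ℝ, 0 ≤ x ∧ x ^ 2 - T * x + D = 0 := by
  rcases hD.lt_or_eq with hD | rfl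
  · obtain ⟨x, hx, hroot⟩ := exists_pos_sq_sub_mul_add_eq_zero (T := T) hD
    exact ⟨x, hx.le, hroot⟩
  · exact ⟨0, le_rfl, by ring⟩

section Njac

variable {β γ δ σ ω α : ℝ}

lemma ofReal_mem_spectrum_Njac {x : ℝ}
    (hx : x ^ 2 - infTrace β γ δ σ α * x + infDet β γ δ σ α = 0) :
    (x : ℂ) ∈ spectrum ℂ ((Njac β γ δ σ ω α).map (Complex.ofReal ·)) := by
  rw [mem_spectrum_Njac_iff]
  exact mul_eq_zero_of_right _ (by exact_mod_cast hx)

lemma re_neg_of_mem_spectrum_Njac (hω : 0 < ω) (hT : infTrace β γ δ σ α < 0)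
    (hD : 0 < infDet β γ δ σ α) {μ : ℂ}
    (hμ : μ ∈ spectrum ℂ ((Njac β γ δ σ ω α).map (Complex.ofReal ·))) : μ.re < 0 := by
  rw [mem_spectrum_Njac_iff] at hμ
  rcases mul_eq_zero.mp hμ with hlin | hquad
  · rw [eq_neg_of_add_eq_zero_left hlin]
    simpa using hω
  · exact re_neg_of_sq_sub_mul_add_eq_zero hT hD hquad

lemma exists_mem_spectrum_Njac_re_nonneg (hD : infDet β γ δ σ α ≤ 0) :
    ∃ μ ∈ spectrum ℂ ((Njac β γ δ σ ω α).map (Complex.ofReal ·)), 0 ≤ μ.re := by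
  obtain ⟨x, hx, hroot⟩ := exists_nonneg_sq_sub_mul_add_eq_zero hD
  exact ⟨x, ofReal_mem_spectrum_Njac hroot, by simpa using hx⟩

lemma exists_mem_spectrum_Njac_re_pos (hD : infDet β γ δ σ α < 0) :
    ∃ μ ∈ spectrum ℂ ((Njac β γ δ σ ω α).map (Complex.ofReal ·)), 0 < μ.re := by
  obtain ⟨x, hx, hroot⟩ := exists_pos_sq_sub_mul_add_eq_zero hD
  exact ⟨x, ofReal_mem_spectrum_Njac hroot, by simpa using hx⟩

end Njac

theorem stmt_14_general (β γ δ σ ω α : ℝ)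
    (hβ : 0 < β) (hγ : 0 < γ) (hσ : 0 < σ) (hω : 0 < ω)
    (hδ : 0 ≤ δ) :
    ((∀ μ ∈ spectrum ℂ ((Njac β γ δ σ ω α).map (Complex.ofReal ·)), μ.re < 0)
        ↔ R0 β γ δ σ α < 1) ∧
    (1 < R0 β γ δ σ α →
      ∃ μ ∈ spectrum ℂ ((Njac β γ δ σ ω α).map (Complex.ofReal ·)), 0 < μ.re) := by
  have hden : 0 < γ * (δ + σ) := by positivity
  rw [R0_lt_one_iff hden, one_lt_R0_iff hden]
  refine ⟨⟨fun hstable => ?_, fun hD μ hμ => ?_⟩, exists_mem_spectrum_Njac_re_pos⟩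
  · by_contra! hD
    obtain ⟨μ, hμ, hre⟩ := exists_mem_spectrum_Njac_re_nonneg hD
    exact (hstable μ hμ).not_ge hre
  · exact re_neg_of_mem_spectrum_Njac hω
      (infTrace_neg_of_infDet_pos hβ.le hγ hσ.le hD) hD hμ

/-- Stability of the disease-free equilibrium: all complex eigenvalues of N have
negative real part iff R₀ < 1; if R₀ > 1 then N has an eigenvalue with positive
real part. -/
theorem stmt_14 (β γ δ σ ω α n : ℝ)
    (hβ : 0 < β) (hγ : 0 < γ) (hσ : 0 < σ) (hω : 0 < ω) (hn : 0 < n)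
    (hδ : 0 ≤ δ) (hα0 : 0 ≤ α) (hα1 : α ≤ 1) :
    ((∀ μ ∈ spectrum ℂ ((Njac β γ δ σ ω α).map (Complex.ofReal ·)), μ.re < 0)
        ↔ R0 β γ δ σ α < 1) ∧
    (1 < R0 β γ δ σ α →
      ∃ μ ∈ spectrum ℂ ((Njac β γ δ σ ω α).map (Complex.ofReal ·)), 0 < μ.re) :=
  stmt_14_general β γ δ σ ω α hβ hγ hσ hω hδ
end

section
/- The matrix N = !![−ω, −αβ−ω, −β−ω; 0, αβ−δ−σ, β; 0, σ, −γ] is singular (det N = 0) if and only if R₀ = 1. -/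
open Matrix Polynomial

theorem det_Njac (β γ δ σ ω α : ℝ) :
    (Njac β γ δ σ ω α).det = ω * (β * (α * γ + σ) - γ * (δ + σ)) := by
  rw [Njac, det_fin_three]
  simp only [of_apply, cons_val', cons_val_zero, cons_val_one, cons_val_two, empty_val',
    cons_val_fin_one, head_cons, tail_cons, head_fin_const]
  ring

theorem R0_eq_one_iff {β γ δ σ α : ℝ} (h : γ * (δ + σ) ≠ 0) :
    R0 β γ δ σ α = 1 ↔ β * (α * γ + σ) = γ * (δ + σ) :=
  div_eq_one_iff_eq h

theorem stmt_15_general (β γ δ σ ω α : ℝ)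
    (hγ : 0 < γ) (hσ : 0 < σ) (hω : 0 < ω)
    (hδ : 0 ≤ δ) :
    (Njac β γ δ σ ω α).det = 0 ↔ R0 β γ δ σ α = 1 := by
  have hden : γ * (δ + σ) ≠ 0 := by positivity
  rw [det_Njac, R0_eq_one_iff hden, mul_eq_zero, sub_eq_zero, or_iff_right hω.ne']

/-- N is singular if and only if R₀ = 1. -/
theorem stmt_15 (β γ δ σ ω α n : ℝ)
    (hβ : 0 < β) (hγ : 0 < γ) (hσ : 0 < σ) (hω : 0 < ω) (hn : 0 < n)
    (hδ : 0 ≤ δ) (hα0 : 0 ≤ α) (hα1 : α ≤ 1) :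
    (Njac β γ δ σ ω α).det = 0 ↔ R0 β γ δ σ α = 1 :=
  stmt_15_general β γ δ σ ω α hγ hσ hω hδ
end

section
/- The eigenvalues of the 4×4 matrix Nᵛ = !![−φ−ω, αβψ/(φ+ψ) − ω, −βψ/(φ+ψ) − ω, ψ−ω; 0, −δ−σ + αβ(ψ+ρφ)/(φ+ψ), β(ψ+ρφ)/(φ+ψ), 0; 0, σ, −γ, 0; φ, −αβρφ/(φ+ψ), −βρφ/(φ+ψ), −ψ] over ℝ are exactly λ₁ = −ω, λ₂ = −φ−ψ, λ₃ = (αβ(ψ+ρφ) − (φ+ψ)(γ+δ+σ) − √Z)/(2(φ+ψ)), and λ₄ = (αβ(ψ+ρφ) − (φ+ψ)(γ+δ+σ) + √Z)/(2(φ+ψ)), where Z = 4βσ(φ+ψ)(ψ+ρφ) + (αβ(ψ+ρφ) + (γ−σ−δ)(φ+ψ))². Since Z > 0, all four eigenvalues are real. -/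
open Matrix Polynomial

/-!
Coordinates 1 and 2 of Nᵛ are the infected compartments, which vanish at p₁; their rows have
zeros in the columns 0 and 3, so after moving coordinates 0 and 3 to the front Nᵛ is block upper
triangular. Its characteristic polynomial is the product of those of the two 2 × 2 diagonal
blocks: the first has trace −φ − ψ − ω and determinant ω(φ + ψ), hence roots −ω and −φ − ψ,
and λ₃, λ₄ are the roots of the second, whose discriminant is Z / (φ + ψ)². A real matrix whose
characteristic polynomial splits over ℝ has only real complex eigenvalues.
-/

/-- The Jacobian of the reduced SVE(R)IRS vector field at the disease-free
equilibrium p₁. -/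
noncomputable def NjacV (β γ δ σ ω α φ ψ ρ : ℝ) : Matrix (Fin 4) (Fin 4) ℝ :=
  !![-φ - ω, α * β * ψ / (φ + ψ) - ω, -(β * ψ) / (φ + ψ) - ω, ψ - ω;
     0, -δ - σ + α * β * (ψ + ρ * φ) / (φ + ψ), β * (ψ + ρ * φ) / (φ + ψ), 0;
     0, σ, -γ, 0;
     φ, -(α * β * ρ * φ) / (φ + ψ), -(β * ρ * φ) / (φ + ψ), -ψ]

/-- The quantity Z appearing in the eigenvalues of Nᵛ. -/
noncomputable def Zval (β γ δ σ α φ ψ ρ : ℝ) : ℝ :=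
  4 * β * σ * (φ + ψ) * (ψ + ρ * φ) + (α * β * (ψ + ρ * φ) + (γ - σ - δ) * (φ + ψ)) ^ 2

namespace Matrix

variable {R : Type*} [CommRing R]

theorem charpoly_eq_mul_of_toBlocks₂₁_eq_zero {m n : Type*} [Fintype m] [Fintype n]
    [DecidableEq m] [DecidableEq n] (M : Matrix (m ⊕ n) (m ⊕ n) R) (h : M.toBlocks₂₁ = 0) :
    M.charpoly = M.toBlocks₁₁.charpoly * M.toBlocks₂₂.charpoly := by
  conv_lhs => rw [← fromBlocks_toBlocks M, h]
  exact charpoly_fromBlocks_zero₂₁ _ _ _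

theorem charpoly_fin_two_eq_mul [Nontrivial R] (M : Matrix (Fin 2) (Fin 2) R) {r₁ r₂ : R}
    (hadd : r₁ + r₂ = M.trace) (hmul : r₁ * r₂ = M.det) :
    M.charpoly = (X - C r₁) * (X - C r₂) := by
  rw [charpoly_fin_two, ← hadd, ← hmul, C_add, C_mul]
  ring

theorem im_eq_zero_of_mem_spectrum_of_splits {n : Type*} [Fintype n] [DecidableEq n]
    {M : Matrix n n ℝ} (hM : M.charpoly.Splits) {μ : ℂ}
    (hμ : μ ∈ spectrum ℂ (M.map (Complex.ofReal ·))) : μ.im = 0 := by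
  rw [mem_spectrum_iff_isRoot_charpoly, show M.map (Complex.ofReal ·) = M.map Complex.ofRealHom
    from rfl, charpoly_map] at hμ
  obtain ⟨r, rfl⟩ := hM.mem_range_of_isRoot M.charpoly_monic.ne_zero hμ
  exact Complex.ofReal_im r

end Matrix

/-- Sends the two summands to the coordinates (0, 3) and (2, 1) of Nᵛ respectively. -/
def uninfectedInfectedEquiv : Fin 2 ⊕ Fin 2 ≃ Fin 4 := finSumFinEquiv.trans (Equiv.swap 1 3)

section NjacV

variable (β γ δ σ ω α φ ψ ρ : ℝ)

theorem toBlocks₂₁_reindex_NjacV :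
    (reindex uninfectedInfectedEquiv.symm uninfectedInfectedEquiv.symm
      (NjacV β γ δ σ ω α φ ψ ρ)).toBlocks₂₁ = 0 := by
  ext i j
  fin_cases i <;> fin_cases j <;> rfl

theorem toBlocks₁₁_reindex_NjacV :
    (reindex uninfectedInfectedEquiv.symm uninfectedInfectedEquiv.symm
      (NjacV β γ δ σ ω α φ ψ ρ)).toBlocks₁₁ = !![-φ - ω, ψ - ω; φ, -ψ] := by
  ext i j
  fin_cases i <;> fin_cases j <;> rfl

theorem toBlocks₂₂_reindex_NjacV :
    (reindex uninfectedInfectedEquiv.symm uninfectedInfectedEquiv.symm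
      (NjacV β γ δ σ ω α φ ψ ρ)).toBlocks₂₂ =
      !![-γ, σ; β * (ψ + ρ * φ) / (φ + ψ), -δ - σ + α * β * (ψ + ρ * φ) / (φ + ψ)] := by
  ext i j
  fin_cases i <;> fin_cases j <;> rfl

theorem charpoly_NjacV (hφψ : φ + ψ ≠ 0) (hZ : 0 ≤ Zval β γ δ σ α φ ψ ρ) :
    (NjacV β γ δ σ ω α φ ψ ρ).charpoly =
      (X - C (-ω)) * (X - C (-φ - ψ)) *
      ((X - C ((α * β * (ψ + ρ * φ) - (φ + ψ) * (γ + δ + σ)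
          - Real.sqrt (Zval β γ δ σ α φ ψ ρ)) / (2 * (φ + ψ)))) *
      (X - C ((α * β * (ψ + ρ * φ) - (φ + ψ) * (γ + δ + σ)
          + Real.sqrt (Zval β γ δ σ α φ ψ ρ)) / (2 * (φ + ψ))))) := by
  rw [← charpoly_reindex uninfectedInfectedEquiv.symm,
    charpoly_eq_mul_of_toBlocks₂₁_eq_zero _ (toBlocks₂₁_reindex_NjacV ..),
    toBlocks₁₁_reindex_NjacV, toBlocks₂₂_reindex_NjacV]
  congr 1 <;> apply charpoly_fin_two_eq_mul <;> simp only [trace_fin_two, det_fin_two, of_apply,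
    cons_val', cons_val_zero, cons_val_one, empty_val', cons_val_fin_one]
  · ring
  · ring
  · field_simp
    ring
  · have hsqrt := Real.sq_sqrt hZ
    field_simp
    unfold Zval at hsqrt ⊢
    linear_combination -hsqrt

end NjacV

theorem Zval_pos {β γ δ σ α φ ψ ρ : ℝ} (hβ : 0 < β) (hσ : 0 < σ) (hφ : 0 < φ) (hψ : 0 < ψ)
    (hρ : 0 ≤ ρ) : 0 < Zval β γ δ σ α φ ψ ρ := by
  have : 0 < ψ + ρ * φ := by positivity
  unfold Zval
  positivity

theorem stmt_18_general (β γ δ σ ω α φ ψ ρ : ℝ)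
    (hβ : 0 < β) (hσ : 0 < σ) (hφ : 0 < φ) (hψ : 0 < ψ) (hρ0 : 0 ≤ ρ) :
    (NjacV β γ δ σ ω α φ ψ ρ).charpoly =
      (X - C (-ω)) * (X - C (-φ - ψ)) *
      (X - C ((α * β * (ψ + ρ * φ) - (φ + ψ) * (γ + δ + σ)
          - Real.sqrt (Zval β γ δ σ α φ ψ ρ)) / (2 * (φ + ψ)))) *
      (X - C ((α * β * (ψ + ρ * φ) - (φ + ψ) * (γ + δ + σ)
          + Real.sqrt (Zval β γ δ σ α φ ψ ρ)) / (2 * (φ + ψ)))) ∧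
    0 < Zval β γ δ σ α φ ψ ρ ∧
    ∀ μ ∈ spectrum ℂ ((NjacV β γ δ σ ω α φ ψ ρ).map (Complex.ofReal ·)), μ.im = 0 := by
  have hZ : 0 < Zval β γ δ σ α φ ψ ρ := Zval_pos hβ hσ hφ hψ hρ0
  have hchar := charpoly_NjacV β γ δ σ ω α φ ψ ρ (by positivity) hZ.le
  refine ⟨by rw [hchar, ← mul_assoc], hZ, fun μ hμ => im_eq_zero_of_mem_spectrum_of_splits ?_ hμ⟩
  rw [hchar]
  exact ((Splits.X_sub_C _).mul (Splits.X_sub_C _)).mul ((Splits.X_sub_C _).mul (Splits.X_sub_C _))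

/-- The eigenvalues of Nᵛ are exactly λ₁ = −ω, λ₂ = −φ−ψ, λ₃ and λ₄: the
characteristic polynomial factors accordingly; moreover Z > 0, so all four
eigenvalues are real. -/
theorem stmt_18 (β γ δ σ ω α n φ ψ ρ : ℝ)
    (hβ : 0 < β) (hγ : 0 < γ) (hσ : 0 < σ) (hω : 0 < ω) (hn : 0 < n)
    (hφ : 0 < φ) (hψ : 0 < ψ) (hδ : 0 ≤ δ) (hα0 : 0 ≤ α) (hα1 : α ≤ 1)
    (hρ0 : 0 ≤ ρ) (hρ1 : ρ ≤ 1) :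
    (NjacV β γ δ σ ω α φ ψ ρ).charpoly =
      (X - C (-ω)) * (X - C (-φ - ψ)) *
      (X - C ((α * β * (ψ + ρ * φ) - (φ + ψ) * (γ + δ + σ)
          - Real.sqrt (Zval β γ δ σ α φ ψ ρ)) / (2 * (φ + ψ)))) *
      (X - C ((α * β * (ψ + ρ * φ) - (φ + ψ) * (γ + δ + σ)
          + Real.sqrt (Zval β γ δ σ α φ ψ ρ)) / (2 * (φ + ψ)))) ∧
    0 < Zval β γ δ σ α φ ψ ρ ∧
    ∀ μ ∈ spectrum ℂ ((NjacV β γ δ σ ω α φ ψ ρ).map (Complex.ofReal ·)), μ.im = 0 :=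
  stmt_18_general β γ δ σ ω α φ ψ ρ hβ hσ hφ hψ hρ0
end

section
/- Proposition (stability of the SVE(R)IRS disease-free equilibrium): det Nᵛ > 0 if and only if R₀ᵛ < 1, the eigenvalues λ₁ = −ω, λ₂ = −φ−ψ, and λ₃ = (αβ(ψ+ρφ) − (φ+ψ)(γ+δ+σ) − √Z)/(2(φ+ψ)) of Nᵛ satisfy λ₁ < 0, λ₂ < 0, and λ₃ ≤ −γ < 0, and consequently every complex eigenvalue of Nᵛ has strictly negative real part if and only if R₀ᵛ < 1. -/
open Matrix Polynomial

/-- The SVE(R)IRS basic reproductive number. -/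
noncomputable def R0v (β γ δ σ α φ ψ ρ : ℝ) : ℝ :=
  (β / γ) * ((α * γ + σ) / (σ + δ)) * ((ψ + ρ * φ) / (ψ + φ))

/-! The span of the first and last coordinate vectors is invariant under Nᵛ, with a block of
characteristic polynomial (μ + ω)(μ + φ + ψ). Multiplied by φ + ψ, the complementary factor becomes
the real quadratic (φ + ψ)μ² + Bμ + C of discriminant Z, and its value at −γ is −βσ(ψ + ρφ) ≤ 0.
So its roots are real and the smaller one is at most −γ; all eigenvalues are then negative iff the
larger root is, i.e. (Vieta) iff C > 0, which is both R₀ᵛ < 1 and det Nᵛ = ωC > 0. -/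

section Quadratic

variable {a b c t : ℝ}

theorem sq_le_discrim_of_quadratic_nonpos (ha : 0 ≤ a) (h : a * (t * t) + b * t + c ≤ 0) :
    (2 * a * t + b) ^ 2 ≤ discrim a b c := by
  rw [discrim]
  nlinarith [mul_nonneg ha (neg_nonneg.2 h)]

theorem quadratic_root_sub_le_of_quadratic_nonpos (ha : 0 < a) (h : a * (t * t) + b * t + c ≤ 0) :
    (-b - √(discrim a b c)) / (2 * a) ≤ t := by
  have := (abs_le.1 (Real.abs_le_sqrt (sq_le_discrim_of_quadratic_nonpos ha.le h))).1
  rw [div_le_iff₀ (by positivity)]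
  linarith

theorem quadratic_roots_mul (ha : a ≠ 0) (hD : 0 ≤ discrim a b c) :
    (-b + √(discrim a b c)) / (2 * a) * ((-b - √(discrim a b c)) / (2 * a)) = c / a := by
  field_simp
  have hs := Real.sq_sqrt hD
  rw [discrim] at hs ⊢
  linear_combination -hs

theorem quadratic_root_add_neg_iff (ha : 0 < a) (hD : 0 ≤ discrim a b c)
    (hneg : (-b - √(discrim a b c)) / (2 * a) < 0) :
    (-b + √(discrim a b c)) / (2 * a) < 0 ↔ 0 < c := by
  rw [← div_pos_iff_of_pos_right ha, ← quadratic_roots_mul ha.ne' hD]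
  exact ⟨fun h ↦ mul_pos_of_neg_of_neg h hneg, fun h ↦ neg_of_mul_pos_left h hneg.le⟩

theorem Complex.quadratic_ofReal_eq_zero_iff (ha : a ≠ 0) (hD : 0 ≤ discrim a b c) (x : ℂ) :
    (a : ℂ) * (x * x) + b * x + c = 0 ↔
      x = ((-b + √(discrim a b c)) / (2 * a) : ℝ) ∨ x = ((-b - √(discrim a b c)) / (2 * a) : ℝ) := by
  have hs : discrim (a : ℂ) b c = (√(discrim a b c) : ℂ) * (√(discrim a b c) : ℂ) := by
    rw [← Complex.ofReal_mul, Real.mul_self_sqrt hD, discrim, discrim]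
    push_cast
    ring
  rw [quadratic_eq_zero_iff (by exact_mod_cast ha) hs]
  push_cast
  rfl

end Quadratic

section Model

variable {R S : Type*} [CommRing R] [CommRing S]

-- Abstracting the rational entries of `NjacV` makes its characteristic polynomial a ring identity.
def NjacForm (γ δ σ ω φ ψ u v y z : R) : Matrix (Fin 4) (Fin 4) R :=
  !![-φ - ω, (u - y) - ω, -(v - z) - ω, ψ - ω;
     0, -δ - σ + u, v, 0;
     0, σ, -γ, 0;
     φ, -y, -z, -ψ]

theorem det_scalar_sub_NjacForm (γ δ σ ω φ ψ u v y z μ : R) :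
    (scalar (Fin 4) μ - NjacForm γ δ σ ω φ ψ u v y z).det =
      (μ + ω) * (μ + (φ + ψ)) * (μ * μ + (γ + δ + σ - u) * μ + (γ * (σ + δ) - u * γ - v * σ)) := by
  simp [NjacForm, det_succ_row_zero, Fin.sum_univ_succ, Fin.succAbove]
  ring

theorem NjacForm_map (f : R →+* S) (γ δ σ ω φ ψ u v y z : R) :
    (NjacForm γ δ σ ω φ ψ u v y z).map f =
      NjacForm (f γ) (f δ) (f σ) (f ω) (f φ) (f ψ) (f u) (f v) (f y) (f z) := by
  ext i j
  fin_cases i <;> fin_cases j <;> simp [NjacForm]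

end Model

section SVERIRS

variable (β γ δ σ ω α φ ψ ρ : ℝ)

def Bval : ℝ := (φ + ψ) * (γ + δ + σ) - α * β * (ψ + ρ * φ)

def Cval : ℝ := (φ + ψ) * γ * (σ + δ) - β * (ψ + ρ * φ) * (α * γ + σ)

theorem NjacV_eq_NjacForm (hP : φ + ψ ≠ 0) :
    NjacV β γ δ σ ω α φ ψ ρ = NjacForm γ δ σ ω φ ψ
      (α * β * (ψ + ρ * φ) / (φ + ψ)) (β * (ψ + ρ * φ) / (φ + ψ))
      (α * β * ρ * φ / (φ + ψ)) (β * ρ * φ / (φ + ψ)) := by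
  ext i j
  fin_cases i <;> fin_cases j <;> simp [NjacV, NjacForm] <;> field_simp <;> ring

theorem Zval_eq_discrim :
    Zval β γ δ σ α φ ψ ρ = discrim (φ + ψ) (Bval β γ δ σ α φ ψ ρ) (Cval β γ δ σ α φ ψ ρ) := by
  rw [Zval, Bval, Cval, discrim]
  ring

theorem quadratic_Bval_Cval_at_neg_gamma :
    (φ + ψ) * (-γ * -γ) + Bval β γ δ σ α φ ψ ρ * -γ + Cval β γ δ σ α φ ψ ρ =
      -(β * σ * (ψ + ρ * φ)) := by
  rw [Bval, Cval]
  ring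

theorem det_NjacV (hP : φ + ψ ≠ 0) :
    (NjacV β γ δ σ ω α φ ψ ρ).det = ω * Cval β γ δ σ α φ ψ ρ := by
  have h := det_scalar_sub_NjacForm γ δ σ ω φ ψ (α * β * (ψ + ρ * φ) / (φ + ψ))
    (β * (ψ + ρ * φ) / (φ + ψ)) (α * β * ρ * φ / (φ + ψ)) (β * ρ * φ / (φ + ψ)) 0
  rw [scalar_apply, diagonal_zero, zero_sub, det_neg, Fintype.card_fin,
    Even.neg_one_pow (by decide), one_mul, ← NjacV_eq_NjacForm _ _ _ _ _ _ _ _ _ hP] at h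
  rw [h, Cval]
  field_simp
  ring

variable {β γ δ σ ω α φ ψ ρ}

theorem R0v_lt_one_iff (hγ : 0 < γ) (hσδ : 0 < σ + δ) (hP : 0 < φ + ψ) :
    R0v β γ δ σ α φ ψ ρ < 1 ↔ 0 < Cval β γ δ σ α φ ψ ρ := by
  rw [R0v, Cval, div_mul_div_comm, div_mul_div_comm,
    div_lt_one (mul_pos (mul_pos hγ hσδ) (by linarith)), sub_pos]
  constructor <;> intro h <;> linarith

theorem mem_spectrum_NjacV_iff (hP : φ + ψ ≠ 0) (hD : 0 ≤ Zval β γ δ σ α φ ψ ρ) (μ : ℂ) :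
    μ ∈ spectrum ℂ ((NjacV β γ δ σ ω α φ ψ ρ).map (Complex.ofReal ·)) ↔
      μ = -ω ∨ μ = -(φ + ψ) ∨
      μ = ((-Bval β γ δ σ α φ ψ ρ + √(Zval β γ δ σ α φ ψ ρ)) / (2 * (φ + ψ)) : ℝ) ∨
      μ = ((-Bval β γ δ σ α φ ψ ρ - √(Zval β γ δ σ α φ ψ ρ)) / (2 * (φ + ψ)) : ℝ) := by
  rw [Zval_eq_discrim] at hD ⊢
  rw [← Complex.quadratic_ofReal_eq_zero_iff hP hD, mem_spectrum_iff_isRoot_charpoly, IsRoot.def,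
    eval_charpoly, NjacV_eq_NjacForm _ _ _ _ _ _ _ _ _ hP,
    show (fun x : ℝ => (x : ℂ)) = Complex.ofRealHom from rfl, NjacForm_map,
    det_scalar_sub_NjacForm]
  simp only [Complex.ofRealHom_eq_coe]
  have hPc : ((φ + ψ : ℝ) : ℂ) ≠ 0 := by exact_mod_cast hP
  have hQ : ∀ u v : ℝ, (φ + ψ) * u = α * β * (ψ + ρ * φ) → (φ + ψ) * v = β * (ψ + ρ * φ) →
      ((φ + ψ : ℝ) : ℂ) * (μ * μ + (γ + δ + σ - u) * μ + (γ * (σ + δ) - u * γ - v * σ)) =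
        ((φ + ψ : ℝ) : ℂ) * (μ * μ) + (Bval β γ δ σ α φ ψ ρ : ℂ) * μ + Cval β γ δ σ α φ ψ ρ := by
    intro u v hu hv
    have hu' : ((φ : ℂ) + ψ) * u = α * β * (ψ + ρ * φ) := by exact_mod_cast hu
    have hv' : ((φ : ℂ) + ψ) * v = β * (ψ + ρ * φ) := by exact_mod_cast hv
    simp only [Bval, Cval]
    push_cast
    linear_combination (-μ - γ) * hu' - σ * hv'
  rw [mul_eq_zero, mul_eq_zero, add_eq_zero_iff_eq_neg, add_eq_zero_iff_eq_neg, or_assoc,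
    ← hQ _ _ (mul_div_cancel₀ _ hP) (mul_div_cancel₀ _ hP), mul_eq_zero_iff_left hPc]

end SVERIRS

theorem stmt_19_general (β γ δ σ ω α φ ψ ρ : ℝ)
    (hβ : 0 < β) (hγ : 0 < γ) (hσ : 0 < σ) (hω : 0 < ω)
    (hφ : 0 < φ) (hψ : 0 < ψ) (hδ : 0 ≤ δ)
    (hρ0 : 0 ≤ ρ) :
    (0 < (NjacV β γ δ σ ω α φ ψ ρ).det ↔ R0v β γ δ σ α φ ψ ρ < 1) ∧
    (-ω < 0) ∧ (-φ - ψ < 0) ∧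
    ((α * β * (ψ + ρ * φ) - (φ + ψ) * (γ + δ + σ)
        - Real.sqrt (Zval β γ δ σ α φ ψ ρ)) / (2 * (φ + ψ)) ≤ -γ) ∧ (-γ < 0) ∧
    ((∀ μ ∈ spectrum ℂ ((NjacV β γ δ σ ω α φ ψ ρ).map (Complex.ofReal ·)), μ.re < 0)
        ↔ R0v β γ δ σ α φ ψ ρ < 1) := by
  have hP : 0 < φ + ψ := by positivity
  have hR0 := R0v_lt_one_iff (ρ := ρ) (α := α) (β := β) hγ (by positivity : 0 < σ + δ) hP
  have hD : 0 ≤ Zval β γ δ σ α φ ψ ρ := by rw [Zval]; positivity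
  have hq : (φ + ψ) * (-γ * -γ) + Bval β γ δ σ α φ ψ ρ * -γ + Cval β γ δ σ α φ ψ ρ ≤ 0 := by
    rw [quadratic_Bval_Cval_at_neg_gamma, neg_nonpos]
    positivity
  have hlam₃ : (-Bval β γ δ σ α φ ψ ρ - √(Zval β γ δ σ α φ ψ ρ)) / (2 * (φ + ψ)) ≤ -γ := by
    rw [Zval_eq_discrim]
    exact quadratic_root_sub_le_of_quadratic_nonpos hP hq
  have hlam₄ : (-Bval β γ δ σ α φ ψ ρ + √(Zval β γ δ σ α φ ψ ρ)) / (2 * (φ + ψ)) < 0 ↔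
      0 < Cval β γ δ σ α φ ψ ρ := by
    rw [Zval_eq_discrim] at hD hlam₃ ⊢
    exact quadratic_root_add_neg_iff hP hD (hlam₃.trans_lt (neg_neg_of_pos hγ))
  have hlam₃_eq : α * β * (ψ + ρ * φ) - (φ + ψ) * (γ + δ + σ) = -Bval β γ δ σ α φ ψ ρ := by
    rw [Bval]; ring
  refine ⟨?_, neg_neg_of_pos hω, by linarith, hlam₃_eq ▸ hlam₃, neg_neg_of_pos hγ, ?_⟩
  · rw [det_NjacV _ _ _ _ _ _ _ _ _ hP.ne', mul_pos_iff_of_pos_left hω, hR0]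
  · simp only [mem_spectrum_NjacV_iff hP.ne' hD, forall_eq_or_imp, forall_eq, Complex.neg_re,
      Complex.ofReal_re, Complex.add_re]
    rw [hR0, ← hlam₄]
    exact ⟨fun h ↦ h.2.2.1, fun h ↦ ⟨neg_neg_of_pos hω, neg_neg_of_pos hP, h,
      hlam₃.trans_lt (neg_neg_of_pos hγ)⟩⟩

/-- Stability of the SVE(R)IRS disease-free equilibrium: det Nᵛ > 0 iff R₀ᵛ < 1;
the eigenvalues λ₁, λ₂, λ₃ are negative (with λ₃ ≤ −γ < 0); and all complex
eigenvalues of Nᵛ have negative real part iff R₀ᵛ < 1. -/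
theorem stmt_19 (β γ δ σ ω α n φ ψ ρ : ℝ)
    (hβ : 0 < β) (hγ : 0 < γ) (hσ : 0 < σ) (hω : 0 < ω) (hn : 0 < n)
    (hφ : 0 < φ) (hψ : 0 < ψ) (hδ : 0 ≤ δ) (hα0 : 0 ≤ α) (hα1 : α ≤ 1)
    (hρ0 : 0 ≤ ρ) (hρ1 : ρ ≤ 1) :
    (0 < (NjacV β γ δ σ ω α φ ψ ρ).det ↔ R0v β γ δ σ α φ ψ ρ < 1) ∧
    (-ω < 0) ∧ (-φ - ψ < 0) ∧
    ((α * β * (ψ + ρ * φ) - (φ + ψ) * (γ + δ + σ)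
        - Real.sqrt (Zval β γ δ σ α φ ψ ρ)) / (2 * (φ + ψ)) ≤ -γ) ∧ (-γ < 0) ∧
    ((∀ μ ∈ spectrum ℂ ((NjacV β γ δ σ ω α φ ψ ρ).map (Complex.ofReal ·)), μ.re < 0)
        ↔ R0v β γ δ σ α φ ψ ρ < 1) :=
  stmt_19_general β γ δ σ ω α φ ψ ρ hβ hγ hσ hω hφ hψ hδ hρ0
end
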